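/- Let Q₀, V : S × S → ℝ vanish off B and consider the affine path Q(θ) = Q₀ + θ·V. Let θ₀ ∈ ℝ be such that Q̂_{ij}(θ₀) = (1−κ)·Q̃_{ij} + κ·(Q₀ + θ₀ V)_{ij} > 0 for all (i,j) ∈ B. Then the function f(θ) = ψ̄_{Q̃}(Q₀ + θ·V) is twice differentiable at θ₀ and its second derivative equals f''(θ₀) = κ²·κ'·( Σ_{(i,j)∈B} V_{ij}² / Q̂_{ij}(θ₀) − Σ_{i∈S} (Σ_{j:(i,j)∈B} V_{ij})² / μ̂_i(θ₀) ), where μ̂_i(θ₀) = Σ_{j:(i,j)∈B} Q̂_{ij}(θ₀); moreover this second derivative is nonnegative. -/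

import Mathlib

/-!
Along an affine path `Q̂(θ) = a + θ b` both sums in `ψ̄` are relative entropies
`Σ x log (x / c)` of affine families (the edge weights and their row sums), whose second
derivative is `Σ b² / x`. This gives the formula; its nonnegativity is the Engel form of
Cauchy–Schwarz, `(Σ_j v_j)² / Σ_j w_j ≤ Σ_j v_j² / w_j`, applied row by row.
-/

open Finset

/-- Row sum `μ_i(Q) = Σ_{j : (i,j) ∈ B} Q_{ij}` of an edge measure `Q` supported on `B`. -/
noncomputable def rowSum {S : Type} [Fintype S] [DecidableEq S]
    (B : Finset (S × S)) (Q : S × S → ℝ) (i : S) : ℝ :=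
  ∑ j ∈ Finset.univ.filter (fun j => (i, j) ∈ B), Q (i, j)

/-- The shifted edge measure `Q̂_{ij} = (1-κ)·Q̃_{ij} + κ·Q_{ij}`. -/
noncomputable def hatQ {α : Type} (Qt : α → ℝ) (κ : ℝ) (Q : α → ℝ) : α → ℝ :=
  fun e => (1 - κ) * Qt e + κ * Q e

/-- The surrogate penalty function
`ψ̄_{Q̃}(Q) = κ'·( Σ_{(i,j)∈B} Q̂_{ij}·log(Q̂_{ij}/Q̃_{ij}) − Σ_{i∈S} μ̂_i·log(μ̂_i/μ̃_i) )`,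
with the convention `0·log(0/b) = 0` (automatic, since `Real.log 0 = 0`). -/
noncomputable def psibar {S : Type} [Fintype S] [DecidableEq S]
    (B : Finset (S × S)) (Qt : S × S → ℝ) (κ κ' : ℝ) (Q : S × S → ℝ) : ℝ :=
  κ' * ((∑ e ∈ B, hatQ Qt κ Q e * Real.log (hatQ Qt κ Q e / Qt e)) -
        ∑ i : S, rowSum B (hatQ Qt κ Q) i *
          Real.log (rowSum B (hatQ Qt κ Q) i / rowSum B Qt i))

open Topology

theorem hasDerivAt_affine (a b θ : ℝ) : HasDerivAt (fun t => a + t * b) b θ := by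
  simpa using ((hasDerivAt_id θ).mul_const b).const_add a

theorem hasDerivAt_log_affine_div {a b c θ : ℝ} (hx : a + θ * b ≠ 0) (hc : c ≠ 0) :
    HasDerivAt (fun t => Real.log ((a + t * b) / c)) (b / (a + θ * b)) θ := by
  refine ((Real.hasDerivAt_log (div_ne_zero hx hc)).comp θ
    ((hasDerivAt_affine a b θ).div_const c)).congr_deriv ?_
  rw [inv_div, div_mul_div_comm, mul_comm c b, mul_div_mul_right _ _ hc]

theorem hasDerivAt_affine_mul_log_div {a b c θ : ℝ} (hx : a + θ * b ≠ 0) (hc : c ≠ 0) :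
    HasDerivAt (fun t => (a + t * b) * Real.log ((a + t * b) / c))
      (b * (Real.log ((a + θ * b) / c) + 1)) θ := by
  refine ((hasDerivAt_affine a b θ).mul (hasDerivAt_log_affine_div hx hc)).congr_deriv ?_
  rw [mul_div_cancel₀ _ hx]
  ring

section AffineRelEntropy

variable {ι : Type*} (s : Finset ι) (a b c : ι → ℝ)

noncomputable def affineRelEntropy (t : ℝ) : ℝ :=
  ∑ k ∈ s, (a k + t * b k) * Real.log ((a k + t * b k) / c k)

noncomputable def affineRelEntropyDeriv (t : ℝ) : ℝ :=
  ∑ k ∈ s, b k * (Real.log ((a k + t * b k) / c k) + 1)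

variable {s a b c}

theorem eventually_hasDerivAt_affineRelEntropy {θ : ℝ} (hc : ∀ k ∈ s, c k ≠ 0)
    (hx : ∀ k ∈ s, a k + θ * b k ≠ 0) :
    ∀ᶠ t in 𝓝 θ, HasDerivAt (affineRelEntropy s a b c) (affineRelEntropyDeriv s a b c t) t := by
  have hx_near : ∀ᶠ t in 𝓝 θ, ∀ k ∈ s, a k + t * b k ≠ 0 := by
    rw [Finset.eventually_all]
    intro k hk
    have hcont : Continuous fun t : ℝ => a k + t * b k := by fun_prop
    exact hcont.continuousAt.eventually_ne (hx k hk)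
  filter_upwards [hx_near] with t ht
  exact HasDerivAt.fun_sum fun k hk => hasDerivAt_affine_mul_log_div (ht k hk) (hc k hk)

theorem hasDerivAt_affineRelEntropyDeriv {θ : ℝ} (hc : ∀ k ∈ s, c k ≠ 0)
    (hx : ∀ k ∈ s, a k + θ * b k ≠ 0) :
    HasDerivAt (affineRelEntropyDeriv s a b c) (∑ k ∈ s, b k ^ 2 / (a k + θ * b k)) θ := by
  refine HasDerivAt.fun_sum fun k hk => ?_
  exact (((hasDerivAt_log_affine_div (hx k hk) (hc k hk)).add_const 1).const_mul (b k)).congr_deriv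
    (by ring)

end AffineRelEntropy

section RowSum

variable {S : Type} [Fintype S] [DecidableEq S] {B : Finset (S × S)}

theorem sum_eq_sum_rowSum (F : S × S → ℝ) :
    ∑ e ∈ B, F e = ∑ i, rowSum B F i :=
  Finset.sum_finset_product _ _ _ (by simp)

theorem rowSum_affine (x v : S × S → ℝ) (θ : ℝ) (i : S) :
    rowSum B (fun e => x e + θ * v e) i = rowSum B x i + θ * rowSum B v i := by
  simp only [rowSum, Finset.sum_add_distrib, Finset.mul_sum]

theorem rowSum_const_mul (κ : ℝ) (v : S × S → ℝ) (i : S) :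
    rowSum B (fun e => κ * v e) i = κ * rowSum B v i := by
  simp only [rowSum, Finset.mul_sum]

theorem rowSum_pos {w : S × S → ℝ} {i : S} (hi : ∃ j, (i, j) ∈ B) (hw : ∀ e ∈ B, 0 < w e) :
    0 < rowSum B w i := by
  obtain ⟨j, hj⟩ := hi
  exact Finset.sum_pos (fun j' hj' => hw _ (by simpa using hj')) ⟨j, by simpa using hj⟩

theorem sum_sq_rowSum_div_le {v w : S × S → ℝ} (hw : ∀ e ∈ B, 0 < w e) :
    ∑ i, rowSum B v i ^ 2 / rowSum B w i ≤ ∑ e ∈ B, v e ^ 2 / w e := by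
  rw [sum_eq_sum_rowSum]
  exact Finset.sum_le_sum fun i _ =>
    Finset.sq_sum_div_le_sum_sq_div _ _ fun j hj => hw _ (by simpa using hj)

end RowSum

theorem hatQ_affine_path {α : Type} (Qt : α → ℝ) (κ : ℝ) (Q0 V : α → ℝ) (θ : ℝ) :
    hatQ Qt κ (fun e => Q0 e + θ * V e) = fun e => hatQ Qt κ Q0 e + θ * (κ * V e) := by
  funext e
  simp only [hatQ]
  ring

theorem psibar_affine_path {S : Type} [Fintype S] [DecidableEq S] (B : Finset (S × S))
    (Qt : S × S → ℝ) (κ κ' : ℝ) (Q0 V : S × S → ℝ) (θ : ℝ) :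
    psibar B Qt κ κ' (fun e => Q0 e + θ * V e) =
      κ' * (affineRelEntropy B (hatQ Qt κ Q0) (fun e => κ * V e) Qt θ -
        affineRelEntropy univ (rowSum B (hatQ Qt κ Q0)) (rowSum B fun e => κ * V e)
          (rowSum B Qt) θ) := by
  simp only [psibar, affineRelEntropy, hatQ_affine_path, rowSum_affine]

theorem psibar_second_deriv_along_affine_path_general {S : Type} [Fintype S] [DecidableEq S]
    (B : Finset (S × S)) (hB : ∀ i : S, ∃ j : S, (i, j) ∈ B)
    (Qt : S × S → ℝ) (hQtpos : ∀ e ∈ B, 0 < Qt e)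
    (κ κ' : ℝ) (hκ' : 0 < κ')
    (Q0 V : S × S → ℝ)
    (θ0 : ℝ)
    (hpos : ∀ e ∈ B, 0 < hatQ Qt κ (fun e' => Q0 e' + θ0 * V e') e) :
    HasDerivAt (deriv (fun θ : ℝ => psibar B Qt κ κ' (fun e => Q0 e + θ * V e)))
      (κ ^ 2 * κ' *
        ((∑ e ∈ B, V e ^ 2 / hatQ Qt κ (fun e' => Q0 e' + θ0 * V e') e) -
         ∑ i : S, (∑ j ∈ Finset.univ.filter (fun j => (i, j) ∈ B), V (i, j)) ^ 2 /
           rowSum B (hatQ Qt κ (fun e' => Q0 e' + θ0 * V e')) i))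
      θ0 ∧
    0 ≤ κ ^ 2 * κ' *
        ((∑ e ∈ B, V e ^ 2 / hatQ Qt κ (fun e' => Q0 e' + θ0 * V e') e) -
         ∑ i : S, (∑ j ∈ Finset.univ.filter (fun j => (i, j) ∈ B), V (i, j)) ^ 2 /
           rowSum B (hatQ Qt κ (fun e' => Q0 e' + θ0 * V e')) i) := by
  simp only [hatQ_affine_path] at hpos ⊢
  have hx : ∀ e ∈ B, hatQ Qt κ Q0 e + θ0 * (κ * V e) ≠ 0 := fun e he => (hpos e he).ne'
  have hrow : ∀ i ∈ univ, rowSum B (hatQ Qt κ Q0) i + θ0 * rowSum B (fun e => κ * V e) i ≠ 0 :=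
    fun i _ => by simpa only [← rowSum_affine] using (rowSum_pos (hB i) hpos).ne'
  have hQt : ∀ e ∈ B, Qt e ≠ 0 := fun e he => (hQtpos e he).ne'
  have hQtrow : ∀ i ∈ univ, rowSum B Qt i ≠ 0 := fun i _ => (rowSum_pos (hB i) hQtpos).ne'
  have hfirst : deriv (fun θ => psibar B Qt κ κ' (fun e => Q0 e + θ * V e)) =ᶠ[𝓝 θ0]
      fun t => κ' * (affineRelEntropyDeriv B (hatQ Qt κ Q0) (fun e => κ * V e) Qt t -
        affineRelEntropyDeriv univ (rowSum B (hatQ Qt κ Q0)) (rowSum B fun e => κ * V e)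
          (rowSum B Qt) t) := by
    filter_upwards [eventually_hasDerivAt_affineRelEntropy hQt hx,
      eventually_hasDerivAt_affineRelEntropy hQtrow hrow] with t hedge hrows
    simp only [psibar_affine_path]
    exact ((hedge.sub hrows).const_mul κ').deriv
  have hsecond := ((hasDerivAt_affineRelEntropyDeriv hQt hx).sub
    (hasDerivAt_affineRelEntropyDeriv hQtrow hrow)).const_mul κ'
  refine ⟨(hsecond.congr_of_eventuallyEq hfirst).congr_deriv ?_,
    mul_nonneg (by positivity) (sub_nonneg.2 (sum_sq_rowSum_div_le hpos))⟩
  change _ = κ ^ 2 * κ' * (_ - ∑ i, rowSum B V i ^ 2 / _)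
  simp only [rowSum_affine, rowSum_const_mul, mul_pow, mul_div_assoc, ← Finset.mul_sum]
  ring

/-- Along the affine path `Q(θ) = Q₀ + θ·V` (with `Q₀, V` vanishing off
`B`), if `Q̂_{ij}(θ₀) > 0` for all `(i,j) ∈ B`, then `f(θ) = ψ̄_{Q̃}(Q₀ + θ·V)` is twice
differentiable at `θ₀` with second derivative
`κ²κ'·( Σ_{(i,j)∈B} V_{ij}²/Q̂_{ij}(θ₀) − Σ_{i∈S} (Σ_{j:(i,j)∈B} V_{ij})²/μ̂_i(θ₀) )`,
and this second derivative is nonnegative. -/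
theorem psibar_second_deriv_along_affine_path {S : Type} [Fintype S] [DecidableEq S]
    (B : Finset (S × S)) (hB : ∀ i : S, ∃ j : S, (i, j) ∈ B)
    (Qt : S × S → ℝ) (hQtoff : ∀ e ∉ B, Qt e = 0) (hQtpos : ∀ e ∈ B, 0 < Qt e)
    (κ κ' : ℝ) (hκ0 : 0 < κ) (hκ1 : κ ≤ 1) (hκ' : 0 < κ')
    (Q0 V : S × S → ℝ) (hQ0off : ∀ e ∉ B, Q0 e = 0) (hVoff : ∀ e ∉ B, V e = 0)
    (θ0 : ℝ)
    (hpos : ∀ e ∈ B, 0 < hatQ Qt κ (fun e' => Q0 e' + θ0 * V e') e) :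
    HasDerivAt (deriv (fun θ : ℝ => psibar B Qt κ κ' (fun e => Q0 e + θ * V e)))
      (κ ^ 2 * κ' *
        ((∑ e ∈ B, V e ^ 2 / hatQ Qt κ (fun e' => Q0 e' + θ0 * V e') e) -
         ∑ i : S, (∑ j ∈ Finset.univ.filter (fun j => (i, j) ∈ B), V (i, j)) ^ 2 /
           rowSum B (hatQ Qt κ (fun e' => Q0 e' + θ0 * V e')) i))
      θ0 ∧
    0 ≤ κ ^ 2 * κ' *
        ((∑ e ∈ B, V e ^ 2 / hatQ Qt κ (fun e' => Q0 e' + θ0 * V e') e) -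
         ∑ i : S, (∑ j ∈ Finset.univ.filter (fun j => (i, j) ∈ B), V (i, j)) ^ 2 /
           rowSum B (hatQ Qt κ (fun e' => Q0 e' + θ0 * V e')) i) :=
  psibar_second_deriv_along_affine_path_general B hB Qt hQtpos κ κ' hκ' Q0 V θ0 hpos
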